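/- arXiv:2210.03058 — 4 statements merged into one kernel-verified Lean document; each statement's English description precedes it below -/
import Mathlib

section
/- Let q be an odd prime power, d ≥ 2, and t ∈ F_q nonzero. For any E ⊆ F_q^d, the VC-dimension of the hypothesis class H_t^d(E) = {h_{u,v} : u, v ∈ E, u ≠ v}, where h_{u,v}(x) = 1 if ||x−u|| = ||x−v|| = t and 0 otherwise, is at most d. -/
open Finset

/-- The affine-linear functional on `(Fin d → F) × F × F` whose vanishing at
`(p, ∑ p i ^ 2, 1)` encodes `‖p - u‖ = t`. -/
def ellMap {F : Type*} [Field F] {d : ℕ} (u : Fin d → F) (t : F) :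
    ((Fin d → F) × F × F) →ₗ[F] F where
  toFun z := z.2.1 - 2 * ∑ i, u i * z.1 i + ((∑ i, u i ^ 2) - t) * z.2.2
  map_add' a b := by
    simp only [Prod.fst_add, Prod.snd_add, Pi.add_apply, mul_add, Finset.sum_add_distrib]
    ring
  map_smul' c a := by
    simp only [Prod.smul_fst, Prod.smul_snd, Pi.smul_apply, smul_eq_mul, RingHom.id_apply,
      mul_left_comm _ c, ← Finset.mul_sum]
    ring

lemma ellMap_phi {F : Type*} [Field F] {d : ℕ} (u p : Fin d → F) (t : F) :
    ellMap u t (p, ∑ i, p i ^ 2, 1) = (∑ i, (p i - u i) ^ 2) - t := by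
  have : ∀ i, (p i - u i) ^ 2 = p i ^ 2 - 2 * (u i * p i) + u i ^ 2 := fun i => by ring
  simp only [ellMap, LinearMap.coe_mk, AddHom.coe_mk, this, Finset.sum_add_distrib,
    Finset.sum_sub_distrib, ← Finset.mul_sum]
  ring

/-- The VC-dimension of the class `H_t^d(E)` of indicators of intersections of
two spheres of radius `t` with distinct centers in `E` is at most `d`: any
subset of `E` shattered by the class has at most `d` elements. -/
theorem VC_dim_le_d
    {q d : ℕ} (F : Type*) [Field F] [Fintype F]
    (hcard : Fintype.card F = q) (hq : Odd q)
    (hd : 2 ≤ d) (t : F) (ht : t ≠ 0)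
    (E : Set (Fin d → F)) (C : Finset (Fin d → F)) (hCE : ↑C ⊆ E)
    (hshatter : ∀ S ⊆ C, ∃ u ∈ E, ∃ v ∈ E, u ≠ v ∧
      ∀ p ∈ C, ((∑ i, (p i - u i) ^ 2 = t ∧ ∑ i, (p i - v i) ^ 2 = t) ↔ p ∈ S)) :
    C.card ≤ d := by
  classical
  -- the characteristic is odd, so `2 ≠ 0` in `F`
  have h2 : (2 : F) ≠ 0 := by
    intro h
    have hdvd : ringChar F ∣ 2 := ringChar.dvd (by exact_mod_cast h)
    have hchar : ringChar F = 2 := by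
      rcases (Nat.prime_two.eq_one_or_self_of_dvd _ hdvd) with h1 | h2
      · exact absurd h1 (CharP.ringChar_ne_one)
      · exact h2
    have heven : Fintype.card F % 2 = 0 := FiniteField.even_card_of_char_two hchar
    rw [hcard] at heven
    have := Nat.odd_iff.mp hq
    omega
  set V := (Fin d → F) × F × F with hV
  set φ : (Fin d → F) → V := fun p => (p, ∑ i, p i ^ 2, 1) with hφ
  -- translation of the sphere condition
  have htrans : ∀ (u p : Fin d → F), (∑ i, (p i - u i) ^ 2 = t) ↔ ellMap u t (φ p) = 0 := by
    intro u p
    rw [hφ]; rw [ellMap_phi, sub_eq_zero]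
  -- taking `S = C` gives two distinct centers with all of `C` on both spheres
  obtain ⟨u, -, v, -, huv, hC⟩ := hshatter C subset_rfl
  have hCu : ∀ p ∈ C, ellMap u t (φ p) = 0 := fun p hp =>
    (htrans u p).mp (((hC p hp).mpr hp).1)
  have hCv : ∀ p ∈ C, ellMap v t (φ p) = 0 := fun p hp =>
    (htrans v p).mp (((hC p hp).mpr hp).2)
  obtain ⟨i, hi⟩ := Function.ne_iff.mp huv
  -- for each point, a functional separating it from the rest of `C`
  have key : ∀ p ∈ C, ∃ ℓ : V →ₗ[F] F, ℓ (φ p) ≠ 0 ∧ ∀ p' ∈ C, p' ≠ p → ℓ (φ p') = 0 := by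
    intro p hp
    obtain ⟨u', -, v', -, -, hS⟩ := hshatter (C.erase p) (erase_subset _ _)
    have hnot : ¬((∑ j, (p j - u' j) ^ 2 = t) ∧ (∑ j, (p j - v' j) ^ 2 = t)) := by
      intro hboth
      exact (notMem_erase p C) ((hS p hp).mp hboth)
    rcases not_and_or.mp hnot with hne | hne
    · exact ⟨ellMap u' t, fun h0 => hne ((htrans u' p).mpr h0), fun p' hp' hne' =>
        (htrans u' p').mp ((hS p' hp').mpr (mem_erase.mpr ⟨hne', hp'⟩)).1⟩
    · exact ⟨ellMap v' t, fun h0 => hne ((htrans v' p).mpr h0), fun p' hp' hne' =>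
        (htrans v' p').mp ((hS p' hp').mpr (mem_erase.mpr ⟨hne', hp'⟩)).2⟩
  choose! ℓ hℓ0 hℓz using key
  -- the two extra vectors
  set e : V := (0, 1, 0) with he
  set f : V := (Pi.single i 1, 0, 0) with hf
  have hval_e : ∀ w : Fin d → F, ellMap w t e = 1 := by
    intro w; simp [ellMap, he]
  have hval_f : ∀ w : Fin d → F, ellMap w t f = -(2 * w i) := by
    intro w
    simp only [ellMap, hf, LinearMap.coe_mk, AddHom.coe_mk, mul_zero, zero_sub, add_zero,
      Pi.single_apply, mul_ite, mul_one]
    rw [Finset.sum_ite_eq' Finset.univ i w]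
    simp
  -- the big family
  set fam : (↥C ⊕ Fin 2) → V := Sum.elim (fun p => φ ↑p) ![e, f] with hfam
  have hindep : LinearIndependent F fam := by
    rw [Fintype.linearIndependent_iff]
    intro g hg
    -- applying a functional to the relation
    have happ : ∀ L : V →ₗ[F] F,
        (∑ p : ↥C, g (Sum.inl p) * L (φ ↑p)) + (g (Sum.inr 0) * L e + g (Sum.inr 1) * L f)
          = 0 := by
      intro L
      have := congrArg L hg
      rw [map_sum, map_zero] at this
      simp only [map_smul, smul_eq_mul] at this
      rw [Fintype.sum_sum_type] at this
      simpa [hfam, Fin.sum_univ_two] using this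
    -- step 1: kill the `f`-coefficient using `ℓ_u - ℓ_v`
    have hw := happ (ellMap u t - ellMap v t)
    simp only [LinearMap.sub_apply, hval_e, hval_f] at hw
    have hzero : ∀ p : ↥C, g (Sum.inl p) * ((ellMap u t) (φ ↑p) - (ellMap v t) (φ ↑p)) = 0 := by
      intro p; rw [hCu _ p.2, hCv _ p.2]; ring
    rw [Finset.sum_congr rfl (fun p _ => hzero p)] at hw
    simp only [Finset.sum_const_zero, zero_add, sub_self, mul_zero] at hw
    have hg1 : g (Sum.inr 1) = 0 := by
      have hne : (-(2 * u i) - -(2 * v i)) ≠ 0 := by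
        intro h0
        apply hi
        have h1 : (2 : F) * (v i - u i) = 0 := by linear_combination h0
        rcases mul_eq_zero.mp h1 with h | h
        · exact absurd h h2
        · exact (sub_eq_zero.mp h).symm
      rcases mul_eq_zero.mp hw with h | h
      · exact h
      · exact absurd h hne
    -- step 2: kill the `e`-coefficient using `ℓ_u`
    have hu' := happ (ellMap u t)
    rw [Finset.sum_congr rfl (fun p _ => by rw [hCu _ p.2, mul_zero])] at hu'
    rw [hval_e, hval_f, hg1] at hu'
    simp only [Finset.sum_const_zero, zero_add, zero_mul, add_zero, mul_one] at hu'
    -- step 3: kill each `C`-coefficient using the separating functionals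
    have hgC : ∀ p : ↥C, g (Sum.inl p) = 0 := by
      intro p
      have hp' := happ (ℓ ↑p)
      rw [hg1, hu'] at hp'
      simp only [zero_mul, add_zero, zero_add] at hp'
      rw [Finset.sum_eq_single p (fun p' _ hne =>
        by rw [hℓz ↑p p.2 ↑p' p'.2 (fun h => hne (Subtype.ext h)), mul_zero])
        (fun h => absurd (Finset.mem_univ p) h)] at hp'
      exact (mul_eq_zero.mp hp').elim (fun h => h) (fun h => absurd h (hℓ0 ↑p p.2))
    intro j
    rcases j with p | k
    · exact hgC p
    · fin_cases k
      · exact hu'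
      · exact hg1
  -- conclude by comparing with the dimension of `V`
  have hle := hindep.fintype_card_le_finrank
  have hdim : Module.finrank F V = d + 2 := by
    show Module.finrank F ((Fin d → F) × F × F) = d + 2
    rw [Module.finrank_prod, Module.finrank_prod, Module.finrank_self, Module.finrank_pi]
    simp
  rw [hdim] at hle
  simp only [Fintype.card_sum, Fintype.card_coe, Fintype.card_fin] at hle
  omega
end

section
/- Let q be an odd prime power, d ≥ 2, t ∈ F_q nonzero, and u ≠ v ∈ F_q^d. Then the number of points x ∈ F_q^d with ||x − u|| = ||x − v|| = t is at most 2q^{d−2}. -/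
open Finset Polynomial

/-- A nonzero quadratic has at most 2 roots. -/
private lemma quad_card_le {F : Type*} [Field F] {a b c : F} (ha : a ≠ 0) (s : Finset F)
    (h : ∀ x ∈ s, a * x ^ 2 + b * x + c = 0) : s.card ≤ 2 := by
  classical
  set p : F[X] := C a * X ^ 2 + C b * X + C c with hp
  have hpne : p ≠ 0 := by
    intro h0
    apply ha
    have := congrArg (fun q => Polynomial.coeff q 2) h0
    simpa [hp, coeff_add, coeff_C] using this
  have hsub : s ⊆ p.roots.toFinset := by
    intro x hx
    rw [Multiset.mem_toFinset, mem_roots hpne]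
    simpa [hp, IsRoot] using h x hx
  calc s.card ≤ p.roots.toFinset.card := Finset.card_le_card hsub
    _ ≤ Multiset.card p.roots := Multiset.toFinset_card_le _
    _ ≤ p.natDegree := p.card_roots' 
    _ ≤ 2 := natDegree_quadratic_le

private lemma lin_card_le {F : Type*} [Field F] {a b : F} (ha : a ≠ 0) (s : Finset F)
    (h : ∀ x ∈ s, a * x + b = 0) : s.card ≤ 1 := by
  apply Finset.card_le_one.2
  intro x hx y hy
  have h1 := h x hx
  have h2 := h y hy
  have : a * x = a * y := by linear_combination h1 - h2
  exact mul_left_cancel₀ ha this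

private lemma bilin_card_le {F : Type*} [Field F] [Fintype F] {a b c d : F} (ha : a ≠ 0)
    (s : Finset (F × F))
    (h : ∀ p ∈ s, a * p.1 * p.2 + b * p.1 + c * p.2 + d = 0) :
    s.card ≤ 2 * Fintype.card F := by
  classical
  have hsplit := Finset.card_filter_add_card_filter_not
    (s := s) (p := fun p => a * p.1 + c = 0)
  have h1 : (s.filter fun p => a * p.1 + c = 0).card ≤ Fintype.card F := by
    have : (s.filter fun p => a * p.1 + c = 0).card ≤ (Finset.univ : Finset F).card := by
      apply Finset.card_le_card_of_injOn Prod.snd (fun _ _ => Finset.mem_univ _)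
      intro p hp q hq hpq
      simp only [Finset.mem_coe, Finset.mem_filter] at hp hq
      have hp1 : p.1 = q.1 := by
        have e1 : a * p.1 = -c := by linear_combination hp.2
        have e2 : a * q.1 = -c := by linear_combination hq.2
        exact mul_left_cancel₀ ha (e1.trans e2.symm)
      exact Prod.ext hp1 hpq
    simpa using this
  have h2 : (s.filter fun p => ¬(a * p.1 + c = 0)).card ≤ Fintype.card F := by
    have : (s.filter fun p => ¬(a * p.1 + c = 0)).card ≤ (Finset.univ : Finset F).card := by
      apply Finset.card_le_card_of_injOn Prod.fst (fun _ _ => Finset.mem_univ _)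
      intro p hp q hq hpq
      simp only [Finset.mem_coe, Finset.mem_filter] at hp hq
      have hcne : a * p.1 + c ≠ 0 := hp.2
      have hp2 : p.2 = q.2 := by
        have e1 := h p hp.1
        have e2 := h q hq.1
        have : (a * p.1 + c) * (p.2 - q.2) = 0 := by
          rw [hpq] at e1 ⊢
          linear_combination e1 - e2
        rcases mul_eq_zero.1 this with h' | h'
        · exact absurd h' hcne
        · exact sub_eq_zero.1 h'
      exact Prod.ext hpq hp2
    simpa using this
  omega

private lemma zeroset_card_le {F : Type*} [Field F] [Fintype F] [DecidableEq F]
    {d : ℕ} (s : Finset (Fin d)) (W : Finset (Fin d → F))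
    (hW : ∀ y ∈ W, ∀ i ∈ s, y i = 0) :
    W.card ≤ (Fintype.card F) ^ (d - s.card) := by
  classical
  have hinj : W.card
      ≤ (Finset.univ : Finset ({i : Fin d // i ∉ s} → F)).card := by
    apply Finset.card_le_card_of_injOn (fun y i => y i.1) (fun _ _ => Finset.mem_univ _)
    intro y hy z hz hyz
    simp only [Finset.mem_coe] at hy hz
    funext i
    by_cases hi : i ∈ s
    · rw [hW y hy i hi, hW z hz i hi]
    · exact congrFun hyz ⟨i, hi⟩
  refine hinj.trans ?_
  rw [Finset.card_univ, Fintype.card_fun]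
  apply Nat.pow_le_pow_right (Fintype.card_pos)
  rw [Fintype.card_subtype]
  have : Finset.univ.filter (fun i : Fin d => i ∉ s) = Finset.univ \ s := by
    ext i; simp
  rw [this, Finset.card_sdiff_of_subset (Finset.subset_univ _)]
  simp

private lemma two_coord {F : Type*} [Field F] {d : ℕ}
    (e x y : Fin d → F) (t : F) (j k : Fin d) (hkj : k ≠ j) (hj : e j ≠ 0) (h2 : (2:F) ≠ 0)
    (hq1 : ∑ i, x i ^ 2 = t) (hq2 : ∑ i, (x i - e i) ^ 2 = t)
    (hrest : ∀ i, i ≠ j → i ≠ k → x i = y i)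
    (E Rlin Rq A B : F)
    (hE : E = ∑ i, e i ^ 2)
    (hRlin : Rlin = ∑ i ∈ (Finset.univ.erase j).erase k, 2 * e i * y i)
    (hRq : Rq = ∑ i ∈ (Finset.univ.erase j).erase k, y i ^ 2)
    (hA : A = (E - Rlin) / (2 * e j)) (hB : B = -(e k) / (e j)) :
    x j = A + B * x k ∧
      (1 + B ^ 2) * x k ^ 2 + 2 * A * B * x k + (A ^ 2 + Rq - t) = 0 := by
  classical
  have hsplit : ∀ g : Fin d → F, ∑ i, g i
      = g j + (g k + ∑ i ∈ (Finset.univ.erase j).erase k, g i) := by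
    intro g
    rw [← Finset.add_sum_erase Finset.univ g (Finset.mem_univ j),
      ← Finset.add_sum_erase _ g (Finset.mem_erase.2 ⟨hkj, Finset.mem_univ k⟩)]
  have hrest' : ∀ i ∈ (Finset.univ.erase j).erase k, x i = y i := by
    intro i hi
    rw [Finset.mem_erase, Finset.mem_erase] at hi
    exact hrest i hi.2.1 hi.1
  have hlin2 : ∑ i, 2 * e i * x i = E := by
    have hsub : ∑ i, ((x i) ^ 2 - (x i - e i) ^ 2) = 0 := by
      rw [Finset.sum_sub_distrib, hq1, hq2, sub_self]
    have hsub2 : ∑ i, (2 * e i * x i - e i ^ 2) = 0 := by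
      rw [← hsub]; apply Finset.sum_congr rfl; intros; ring
    rw [Finset.sum_sub_distrib] at hsub2
    rw [hE]
    linear_combination hsub2
  have hxy : ∑ i ∈ (Finset.univ.erase j).erase k, 2 * e i * x i = Rlin := by
    rw [hRlin]; exact Finset.sum_congr rfl fun i hi => by rw [hrest' i hi]
  have hlin3 : 2 * e j * x j + (2 * e k * x k + Rlin) = E := by
    rw [← hxy]
    rw [hsplit (fun i => 2 * e i * x i)] at hlin2
    exact hlin2
  have h2ej : 2 * e j ≠ 0 := mul_ne_zero h2 hj
  have hxj : x j = A + B * x k := by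
    apply mul_left_cancel₀ h2ej
    rw [hA, hB]
    field_simp
    linear_combination hlin3
  refine ⟨hxj, ?_⟩
  have hxy2 : ∑ i ∈ (Finset.univ.erase j).erase k, x i ^ 2 = Rq := by
    rw [hRq]; exact Finset.sum_congr rfl fun i hi => by rw [hrest' i hi]
  have hq3 : x j ^ 2 + (x k ^ 2 + Rq) = t := by
    rw [← hxy2]
    rw [hsplit (fun i => x i ^ 2)] at hq1
    exact hq1
  rw [hxj] at hq3
  linear_combination hq3

private lemma three_coord {F : Type*} [Field F] {d : ℕ}
    (e x y : Fin d → F) (t : F) (j k l : Fin d) (hkj : k ≠ j) (hlj : l ≠ j) (hlk : l ≠ k)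
    (hj : e j ≠ 0) (h2 : (2:F) ≠ 0)
    (hq1 : ∑ i, x i ^ 2 = t) (hq2 : ∑ i, (x i - e i) ^ 2 = t)
    (hrest : ∀ i, i ≠ j → i ≠ k → i ≠ l → x i = y i)
    (E Rlin Rq A B C : F)
    (hE : E = ∑ i, e i ^ 2)
    (hRlin : Rlin = ∑ i ∈ ((Finset.univ.erase j).erase k).erase l, 2 * e i * y i)
    (hRq : Rq = ∑ i ∈ ((Finset.univ.erase j).erase k).erase l, y i ^ 2)
    (hA : A = (E - Rlin) / (2 * e j)) (hB : B = -(e k) / (e j)) (hC : C = -(e l) / (e j)) :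
    x j = A + B * x k + C * x l ∧
      (1 + B ^ 2) * x k ^ 2 + (1 + C ^ 2) * x l ^ 2 + (2 * B * C) * (x k * x l)
        + 2 * A * B * x k + 2 * A * C * x l + (A ^ 2 + Rq - t) = 0 := by
  classical
  have hsplit : ∀ g : Fin d → F, ∑ i, g i
      = g j + (g k + (g l + ∑ i ∈ ((Finset.univ.erase j).erase k).erase l, g i)) := by
    intro g
    rw [← Finset.add_sum_erase Finset.univ g (Finset.mem_univ j),
      ← Finset.add_sum_erase _ g (Finset.mem_erase.2 ⟨hkj, Finset.mem_univ k⟩),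
      ← Finset.add_sum_erase _ g
        (Finset.mem_erase.2 ⟨hlk, Finset.mem_erase.2 ⟨hlj, Finset.mem_univ l⟩⟩)]
  have hrest' : ∀ i ∈ ((Finset.univ.erase j).erase k).erase l, x i = y i := by
    intro i hi
    rw [Finset.mem_erase, Finset.mem_erase, Finset.mem_erase] at hi
    exact hrest i hi.2.2.1 hi.2.1 hi.1
  have hlin2 : ∑ i, 2 * e i * x i = E := by
    have hsub : ∑ i, ((x i) ^ 2 - (x i - e i) ^ 2) = 0 := by
      rw [Finset.sum_sub_distrib, hq1, hq2, sub_self]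
    have hsub2 : ∑ i, (2 * e i * x i - e i ^ 2) = 0 := by
      rw [← hsub]; apply Finset.sum_congr rfl; intros; ring
    rw [Finset.sum_sub_distrib] at hsub2
    rw [hE]
    linear_combination hsub2
  have hxy : ∑ i ∈ ((Finset.univ.erase j).erase k).erase l, 2 * e i * x i = Rlin := by
    rw [hRlin]; exact Finset.sum_congr rfl fun i hi => by rw [hrest' i hi]
  have hlin3 : 2 * e j * x j + (2 * e k * x k + (2 * e l * x l + Rlin)) = E := by
    rw [← hxy]
    rw [hsplit (fun i => 2 * e i * x i)] at hlin2
    exact hlin2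
  have h2ej : 2 * e j ≠ 0 := mul_ne_zero h2 hj
  have hxj : x j = A + B * x k + C * x l := by
    apply mul_left_cancel₀ h2ej
    rw [hA, hB, hC]
    field_simp
    linear_combination hlin3
  refine ⟨hxj, ?_⟩
  have hxy2 : ∑ i ∈ ((Finset.univ.erase j).erase k).erase l, x i ^ 2 = Rq := by
    rw [hRq]; exact Finset.sum_congr rfl fun i hi => by rw [hrest' i hi]
  have hq3 : x j ^ 2 + (x k ^ 2 + (x l ^ 2 + Rq)) = t := by
    rw [← hxy2]
    rw [hsplit (fun i => x i ^ 2)] at hq1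
    exact hq1
  rw [hxj] at hq3
  linear_combination hq3

private lemma two_coord_skeleton {F : Type*} [Field F] [Fintype F] [DecidableEq F] {d : ℕ}
    (t : F) (e : Fin d → F) (j k : Fin d) (hkj : k ≠ j) (hj : e j ≠ 0) (h2 : (2 : F) ≠ 0)
    (hcount : ∀ y : Fin d → F, ∀ s : Finset F,
      (∀ z ∈ s,
        (1 + (-(e k) / e j) ^ 2) * z ^ 2
          + 2 * (((∑ i, e i ^ 2) - ∑ i ∈ (Finset.univ.erase j).erase k, 2 * e i * y i)
              / (2 * e j)) * (-(e k) / e j) * z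
          + ((((∑ i, e i ^ 2) - ∑ i ∈ (Finset.univ.erase j).erase k, 2 * e i * y i)
              / (2 * e j)) ^ 2
              + (∑ i ∈ (Finset.univ.erase j).erase k, y i ^ 2) - t) = 0) → s.card ≤ 2) :
    (Finset.univ.filter fun x : Fin d → F =>
        ∑ i, x i ^ 2 = t ∧ ∑ i, (x i - e i) ^ 2 = t).card
      ≤ 2 * (Fintype.card F) ^ (d - 2) := by
  classical
  set T := Finset.univ.filter fun x : Fin d → F =>
      ∑ i, x i ^ 2 = t ∧ ∑ i, (x i - e i) ^ 2 = t with hT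
  set f : (Fin d → F) → (Fin d → F) :=
    fun x => Function.update (Function.update x j 0) k 0 with hf
  set Z := Finset.univ.filter fun y : Fin d → F =>
      ∀ i ∈ ({j, k} : Finset (Fin d)), y i = 0 with hZ
  have hmaps : ∀ x ∈ T, f x ∈ Z := by
    intro x hx
    simp only [hZ, Finset.mem_filter, Finset.mem_univ, true_and, Finset.mem_insert,
      Finset.mem_singleton]
    rintro i (rfl | rfl) <;>
      simp [hf, Function.update_apply, Ne.symm hkj]
  have hfiber : ∀ y ∈ Z, (T.filter fun x => f x = y).card ≤ 2 := by
    intro y _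
    have key : ∀ x ∈ T.filter fun x => f x = y,
        x j = (((∑ i, e i ^ 2) - ∑ i ∈ (Finset.univ.erase j).erase k, 2 * e i * y i)
              / (2 * e j)) + (-(e k) / e j) * x k ∧
        (1 + (-(e k) / e j) ^ 2) * x k ^ 2
          + 2 * (((∑ i, e i ^ 2) - ∑ i ∈ (Finset.univ.erase j).erase k, 2 * e i * y i)
              / (2 * e j)) * (-(e k) / e j) * x k
          + ((((∑ i, e i ^ 2) - ∑ i ∈ (Finset.univ.erase j).erase k, 2 * e i * y i)
              / (2 * e j)) ^ 2
              + (∑ i ∈ (Finset.univ.erase j).erase k, y i ^ 2) - t) = 0 := by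
      intro x hx
      rw [Finset.mem_filter, hT, Finset.mem_filter] at hx
      obtain ⟨⟨-, hx1, hx2⟩, hfx⟩ := hx
      refine two_coord e x y t j k hkj hj h2 hx1 hx2 ?_ _ _ _ _ _ rfl rfl rfl rfl rfl
      intro i hij hik
      have h := congrFun hfx i
      simp only [hf, Function.update_apply, if_neg hik, if_neg hij] at h
      exact h
    have hinj : Set.InjOn (fun x : Fin d → F => x k)
        ↑(T.filter fun x => f x = y) := by
      intro x hx x' hx' hxx
      simp only [Finset.mem_coe] at hx hx'
      have k1 := (key x hx).1
      have k2 := (key x' hx').1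
      simp only at hxx
      funext i
      rcases eq_or_ne i j with rfl | hij
      · rw [k1, k2, hxx]
      rcases eq_or_ne i k with rfl | hik
      · exact hxx
      · have e1 := congrFun (Finset.mem_filter.1 hx).2 i
        have e2 := congrFun (Finset.mem_filter.1 hx').2 i
        simp only [hf, Function.update_apply, if_neg hik, if_neg hij] at e1 e2
        rw [e1, e2]
    rw [← Finset.card_image_of_injOn hinj]
    apply hcount y
    intro z hz
    obtain ⟨x, hx, rfl⟩ := Finset.mem_image.1 hz
    exact (key x hx).2
  have h1 := Finset.card_le_mul_card_image_of_maps_to hmaps 2 hfiber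
  refine h1.trans ?_
  apply Nat.mul_le_mul le_rfl
  have h3 := zeroset_card_le ({j, k} : Finset (Fin d)) Z
    (fun y hy => (Finset.mem_filter.1 hy).2)
  rwa [Finset.card_pair (Ne.symm hkj)] at h3

private lemma caseB3_bound {F : Type*} [Field F] [Fintype F] [DecidableEq F] {d : ℕ}
    (t : F) (e : Fin d → F) (j k l : Fin d) (hkj : k ≠ j) (hlj : l ≠ j) (hlk : l ≠ k)
    (hj : e j ≠ 0) (h2 : (2 : F) ≠ 0) (hd3 : 3 ≤ d)
    (hball : ∀ m, m ≠ j → e j ^ 2 + e m ^ 2 = 0) :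
    (Finset.univ.filter fun x : Fin d → F =>
        ∑ i, x i ^ 2 = t ∧ ∑ i, (x i - e i) ^ 2 = t).card
      ≤ 2 * (Fintype.card F) ^ (d - 2) := by
  classical
  have hsq : ∀ m, m ≠ j → 1 + (-(e m) / e j) ^ 2 = 0 := by
    intro m hm
    have h0 := hball m hm
    have hme : e j ^ 2 * (1 + (-(e m) / e j) ^ 2) = e j ^ 2 + e m ^ 2 := by
      field_simp; try ring
    rw [h0] at hme
    rcases mul_eq_zero.1 hme with h' | h'
    · exact absurd h' (pow_ne_zero 2 hj)
    · exact h'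
  have hB2 : 1 + (-(e k) / e j) ^ 2 = 0 := hsq k hkj
  have hC2 : 1 + (-(e l) / e j) ^ 2 = 0 := hsq l hlj
  have hBne : -(e k) / e j ≠ 0 := by
    intro h0; rw [h0] at hB2; norm_num at hB2
  have hCne : -(e l) / e j ≠ 0 := by
    intro h0; rw [h0] at hC2; norm_num at hC2
  have ha : 2 * (-(e k) / e j) * (-(e l) / e j) ≠ 0 :=
    mul_ne_zero (mul_ne_zero h2 hBne) hCne
  set T := Finset.univ.filter fun x : Fin d → F =>
      ∑ i, x i ^ 2 = t ∧ ∑ i, (x i - e i) ^ 2 = t with hT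
  set f : (Fin d → F) → (Fin d → F) :=
    fun x => Function.update (Function.update (Function.update x j 0) k 0) l 0 with hf
  set Z := Finset.univ.filter fun y : Fin d → F =>
      ∀ i ∈ ({j, k, l} : Finset (Fin d)), y i = 0 with hZ
  have hmaps : ∀ x ∈ T, f x ∈ Z := by
    intro x hx
    simp only [hZ, Finset.mem_filter, Finset.mem_univ, true_and, Finset.mem_insert,
      Finset.mem_singleton]
    rintro i (rfl | rfl | rfl) <;>
      simp [hf, Function.update_apply, Ne.symm hkj, Ne.symm hlj, Ne.symm hlk]
  have hfiber : ∀ y ∈ Z, (T.filter fun x => f x = y).card ≤ 2 * Fintype.card F := by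
    intro y _
    set AA := ((∑ i, e i ^ 2)
        - ∑ i ∈ ((Finset.univ.erase j).erase k).erase l, 2 * e i * y i) / (2 * e j) with hAA
    set RRq := ∑ i ∈ ((Finset.univ.erase j).erase k).erase l, y i ^ 2 with hRRq
    have key : ∀ x ∈ T.filter fun x => f x = y,
        x j = AA + (-(e k) / e j) * x k + (-(e l) / e j) * x l ∧
        (2 * (-(e k) / e j) * (-(e l) / e j)) * x k * x l
          + (2 * AA * (-(e k) / e j)) * x k + (2 * AA * (-(e l) / e j)) * x l
          + (AA ^ 2 + RRq - t) = 0 := by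
      intro x hx
      rw [Finset.mem_filter, hT, Finset.mem_filter] at hx
      obtain ⟨⟨-, hx1, hx2⟩, hfx⟩ := hx
      have hr : ∀ i, i ≠ j → i ≠ k → i ≠ l → x i = y i := by
        intro i hij hik hil
        have h := congrFun hfx i
        simp only [hf, Function.update_apply, if_neg hil, if_neg hik, if_neg hij] at h
        exact h
      obtain ⟨hxj, hquad⟩ := three_coord e x y t j k l hkj hlj hlk hj h2 hx1 hx2 hr
        _ _ _ _ _ _ rfl rfl hRRq hAA rfl rfl
      exact ⟨hxj, by linear_combination hquad - x k ^ 2 * hB2 - x l ^ 2 * hC2⟩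
    have hinj : Set.InjOn (fun x : Fin d → F => (x k, x l))
        ↑(T.filter fun x => f x = y) := by
      intro x hx x' hx' hxx
      simp only [Finset.mem_coe] at hx hx'
      have k1 := (key x hx).1
      have k2 := (key x' hx').1
      simp only [Prod.mk.injEq] at hxx
      funext i
      rcases eq_or_ne i j with rfl | hij
      · rw [k1, k2, hxx.1, hxx.2]
      rcases eq_or_ne i k with rfl | hik
      · exact hxx.1
      rcases eq_or_ne i l with rfl | hil
      · exact hxx.2
      · have e1 := congrFun (Finset.mem_filter.1 hx).2 i
        have e2 := congrFun (Finset.mem_filter.1 hx').2 i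
        simp only [hf, Function.update_apply, if_neg hil, if_neg hik, if_neg hij] at e1 e2
        rw [e1, e2]
    rw [← Finset.card_image_of_injOn hinj]
    apply bilin_card_le ha
    intro p hp
    obtain ⟨x, hx, rfl⟩ := Finset.mem_image.1 hp
    exact (key x hx).2
  have h1 := Finset.card_le_mul_card_image_of_maps_to hmaps (2 * Fintype.card F) hfiber
  refine h1.trans ?_
  have h3 := zeroset_card_le ({j, k, l} : Finset (Fin d)) Z
    (fun y hy => (Finset.mem_filter.1 hy).2)
  have hc3 : ({j, k, l} : Finset (Fin d)).card = 3 := by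
    rw [Finset.card_insert_of_notMem (by simp [Ne.symm hkj, Ne.symm hlj]),
      Finset.card_pair (Ne.symm hlk)]
  rw [hc3] at h3
  refine le_trans (Nat.mul_le_mul le_rfl h3) (le_of_eq ?_)
  have hdd : d - 2 = (d - 3) + 1 := by omega
  rw [hdd, pow_succ]
  ring

private lemma centered_bound {q d : ℕ} (F : Type*) [Field F] [Fintype F]
    (hcard : Fintype.card F = q) (hq : Odd q) (hd : 2 ≤ d) (t : F) (ht : t ≠ 0)
    (e : Fin d → F) (he : e ≠ 0) :
    Set.ncard {x : Fin d → F | ∑ i, x i ^ 2 = t ∧ ∑ i, (x i - e i) ^ 2 = t}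
      ≤ 2 * q ^ (d - 2) := by
  classical
  subst hcard
  have h2 : (2 : F) ≠ 0 := by
    intro h0
    have hdvd : ringChar F ∣ 2 :=
      (CharP.cast_eq_zero_iff F (ringChar F) 2).1 (by exact_mod_cast h0)
    have hchar : ringChar F = 2 := by
      rcases (Nat.dvd_prime Nat.prime_two).1 hdvd with h | h
      · exact absurd h CharP.ringChar_ne_one
      · exact h
    haveI : CharP F 2 := hchar ▸ ringChar.charP F
    obtain ⟨n, -, hc⟩ := FiniteField.card F 2
    rw [hc] at hq
    exact (Nat.not_odd_iff_even.2 (Nat.even_pow.2 ⟨even_two, n.2.ne'⟩)) hq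
  obtain ⟨j, hj⟩ := Function.ne_iff.1 he
  replace hj : e j ≠ 0 := hj
  rw [Set.ncard_eq_toFinset_card', Set.toFinset_setOf]
  by_cases hA : ∃ k, k ≠ j ∧ e j ^ 2 + e k ^ 2 ≠ 0
  · obtain ⟨k, hkj, hjk⟩ := hA
    apply two_coord_skeleton t e j k hkj hj h2
    intro y s hs
    have hB2 : 1 + (-(e k) / e j) ^ 2 ≠ 0 := by
      intro h0
      apply hjk
      have hme : e j ^ 2 * (1 + (-(e k) / e j) ^ 2) = e j ^ 2 + e k ^ 2 := by
        field_simp; try ring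
      rw [h0, mul_zero] at hme
      exact hme.symm
    exact quad_card_le hB2 s hs
  · push_neg at hA
    have hck : 0 < ((Finset.univ.erase j) : Finset (Fin d)).card := by
      rw [Finset.card_erase_of_mem (Finset.mem_univ j), Finset.card_univ, Fintype.card_fin]
      omega
    obtain ⟨k, hk⟩ := Finset.card_pos.1 hck
    have hkj : k ≠ j := (Finset.mem_erase.1 hk).1
    have hB2 : 1 + (-(e k) / e j) ^ 2 = 0 := by
      have h0 := hA k hkj
      have hme : e j ^ 2 * (1 + (-(e k) / e j) ^ 2) = e j ^ 2 + e k ^ 2 := by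
        field_simp; try ring
      rw [h0] at hme
      rcases mul_eq_zero.1 hme with h' | h'
      · exact absurd h' (pow_ne_zero 2 hj)
      · exact h'
    by_cases hd3 : 3 ≤ d
    · have hcl : 0 < (((Finset.univ.erase j).erase k)).card := by
        rw [Finset.card_erase_of_mem hk, Finset.card_erase_of_mem (Finset.mem_univ j),
          Finset.card_univ, Fintype.card_fin]
        omega
      obtain ⟨l, hl⟩ := Finset.card_pos.1 hcl
      have hlk : l ≠ k := (Finset.mem_erase.1 hl).1
      have hlj : l ≠ j := (Finset.mem_erase.1 (Finset.mem_erase.1 hl).2).1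
      exact caseB3_bound t e j k l hkj hlj hlk hj h2 hd3 hA
    · apply two_coord_skeleton t e j k hkj hj h2
      intro y s hs
      have hrest0 : ((Finset.univ.erase j).erase k) = (∅ : Finset (Fin d)) := by
        rw [← Finset.card_eq_zero, Finset.card_erase_of_mem hk,
          Finset.card_erase_of_mem (Finset.mem_univ j), Finset.card_univ, Fintype.card_fin]
        omega
      rw [hrest0] at hs
      simp only [Finset.sum_empty] at hs
      by_cases hE0 : (∑ i, e i ^ 2) = 0
      · have hs0 : s = ∅ := by
          apply Finset.eq_empty_of_forall_notMem
          intro z hz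
          apply ht
          have h5 := hs z hz
          have h6 : ((∑ i, e i ^ 2) - 0) / (2 * e j) = 0 := by rw [hE0]; simp
          linear_combination z ^ 2 * hB2
            + (2 * (-(e k) / e j) * z + ((∑ i, e i ^ 2) - 0) / (2 * e j)) * h6 - h5
        simp [hs0]
      · have hAne : ((∑ i, e i ^ 2) - 0) / (2 * e j) ≠ 0 :=
          div_ne_zero (by simpa using hE0) (mul_ne_zero h2 hj)
        have hBne : -(e k) / e j ≠ 0 := by
          intro h0; rw [h0] at hB2; norm_num at hB2
        have hco : 2 * (((∑ i, e i ^ 2) - 0) / (2 * e j)) * (-(e k) / e j) ≠ 0 :=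
          mul_ne_zero (mul_ne_zero h2 hAne) hBne
        have hlin : ∀ z ∈ s,
            (2 * (((∑ i, e i ^ 2) - 0) / (2 * e j)) * (-(e k) / e j)) * z
              + ((((∑ i, e i ^ 2) - 0) / (2 * e j)) ^ 2 + 0 - t) = 0 := by
          intro z hz
          linear_combination hs z hz - z ^ 2 * hB2
        exact le_trans (lin_card_le hco s hlin) (by omega)

/-- The intersection of two spheres of radius `t` with distinct centers in
`F_q^d` has at most `2 q^(d-2)` points. -/
theorem two_sphere_intersection_bound
    {q d : ℕ} (F : Type*) [Field F] [Fintype F]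
    (hcard : Fintype.card F = q) (hq : Odd q)
    (hd : 2 ≤ d) (t : F) (ht : t ≠ 0)
    (u v : Fin d → F) (huv : u ≠ v) :
    Set.ncard {x : Fin d → F |
        ∑ i, (x i - u i) ^ 2 = t ∧ ∑ i, (x i - v i) ^ 2 = t}
      ≤ 2 * q ^ (d - 2) := by
  classical
  have hinj : Function.Injective (fun x : Fin d → F => x - u) := by
    intro a b h
    funext i
    have := congrFun h i
    simpa using this
  have himg : (fun x : Fin d → F => x - u) ''
      {x : Fin d → F | ∑ i, (x i - u i) ^ 2 = t ∧ ∑ i, (x i - v i) ^ 2 = t}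
      = {y : Fin d → F | ∑ i, y i ^ 2 = t
          ∧ ∑ i, (y i - (fun i => v i - u i) i) ^ 2 = t} := by
    ext y
    simp only [Set.mem_image, Set.mem_setOf_eq]
    constructor
    · rintro ⟨x, ⟨h1, h2⟩, rfl⟩
      constructor
      · rw [← h1]; apply Finset.sum_congr rfl; intros; simp
      · rw [← h2]; apply Finset.sum_congr rfl; intros; simp only [Pi.sub_apply]; ring
    · rintro ⟨h1, h2⟩
      refine ⟨y + u, ⟨?_, ?_⟩, by funext i; simp⟩
      · rw [← h1]; apply Finset.sum_congr rfl; intros; simp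
      · rw [← h2]; apply Finset.sum_congr rfl; intros; simp only [Pi.add_apply]; ring
  have heq : Set.ncard {x : Fin d → F |
      ∑ i, (x i - u i) ^ 2 = t ∧ ∑ i, (x i - v i) ^ 2 = t}
      = Set.ncard {y : Fin d → F | ∑ i, y i ^ 2 = t
          ∧ ∑ i, (y i - (fun i => v i - u i) i) ^ 2 = t} := by
    rw [← himg, Set.ncard_image_of_injective _ hinj]
  rw [heq]
  apply centered_bound F hcard hq hd t ht
  intro h0
  apply huv
  funext i
  have := congrFun h0 i
  exact (sub_eq_zero.1 (by simpa using this)).symm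
end

section
/- Let G be a finite graph on vertex set E with |E| = N, and suppose the number of ordered 2-paths (x, z, y) with x ≠ y (z adjacent to both) is at least T, while for every pair (x,y) the number of common neighbors k_{(x,y)} satisfies the trivial bound k_{(x,y)} ≤ K. If T ≥ 2(d−1)N^2, then the number of ordered d-prisms (tuples (y,z,x^1,...,x^d) with y ≠ z, x^i distinct, each x^i a common neighbor of y and z) is at least (T/2)^d / N^{2(d−1)}. -/
open Finset

private lemma card_inj_into {E : Type*} [Fintype E] [DecidableEq E] (d : ℕ) (s : Finset E) :
    (Finset.univ.filter fun f : Fin d → E => Function.Injective f ∧ ∀ i, f i ∈ s).card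
      = s.card.descFactorial d := by
  classical
  have e : {f : Fin d → E // Function.Injective f ∧ ∀ i, f i ∈ s} ≃ (Fin d ↪ s) :=
    { toFun := fun x => ⟨fun i => ⟨x.1 i, x.2.2 i⟩, fun i j h => x.2.1 (congrArg Subtype.val h)⟩
      invFun := fun g => ⟨fun i => (g i : E), fun i j h => g.injective (Subtype.ext h),
        fun i => (g i).2⟩
      left_inv := fun x => by ext i; rfl
      right_inv := fun g => by ext i; rfl }
  rw [← Fintype.card_subtype, Fintype.card_congr e, Fintype.card_embedding_eq,
    Fintype.card_fin, Fintype.card_coe]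

/-- If a finite graph on `N` vertices has at least `T` ordered 2-paths
`(x, z, y)` with `x ≠ y`, all common-neighbor counts are at most `K`, and
`T ≥ 2(d-1)N²`, then the number of ordered `d`-prisms is at least
`(T/2)^d / N^(2(d-1))`. -/
theorem prism_count_lower_bound
    {E : Type*} [Fintype E] [DecidableEq E] (G : SimpleGraph E)
    [DecidableRel G.Adj] (d N K : ℕ) (hd : 1 ≤ d)
    (hN : Fintype.card E = N) (T : ℝ)
    (hT : T ≤ (Set.ncard {p : E × E × E |
        p.1 ≠ p.2.1 ∧ G.Adj p.1 p.2.2 ∧ G.Adj p.2.1 p.2.2} : ℝ))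
    (hK : ∀ x y : E, Set.ncard (G.commonNeighbors x y) ≤ K)
    (hT2 : 2 * ((d : ℝ) - 1) * (N : ℝ) ^ 2 ≤ T) :
    (T / 2) ^ d / (N : ℝ) ^ (2 * (d - 1))
      ≤ (Set.ncard {p : E × E × (Fin d → E) |
          p.1 ≠ p.2.1 ∧ Function.Injective p.2.2 ∧
          ∀ i, G.Adj (p.2.2 i) p.1 ∧ G.Adj (p.2.2 i) p.2.1} : ℝ) := by
  classical
  set P : Finset (E × E) := Finset.univ.offDiag with hPdef
  set ks : E × E → ℕ := fun q => (Finset.univ.filter fun w => G.Adj q.1 w ∧ G.Adj q.2 w).card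
    with hksdef
  -- count of ordered 2-paths
  have h2 : (Set.ncard {p : E × E × E |
      p.1 ≠ p.2.1 ∧ G.Adj p.1 p.2.2 ∧ G.Adj p.2.1 p.2.2}) = ∑ q ∈ P, ks q := by
    have hset : {p : E × E × E | p.1 ≠ p.2.1 ∧ G.Adj p.1 p.2.2 ∧ G.Adj p.2.1 p.2.2}
        = ↑(Finset.univ.filter fun p : E × E × E =>
            p.1 ≠ p.2.1 ∧ G.Adj p.1 p.2.2 ∧ G.Adj p.2.1 p.2.2) := by
      ext p; simp
    rw [hset, Set.ncard_coe_finset,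
      Finset.card_eq_sum_card_fiberwise (f := fun p : E × E × E => (p.1, p.2.1)) (t := P)
        (by intro p hp; simp only [Finset.mem_coe, Finset.mem_filter] at hp
            simp [hPdef, Finset.mem_offDiag, hp.2.1])]
    refine Finset.sum_congr rfl fun q hq => ?_
    obtain ⟨q1, q2⟩ := q
    have hne : q1 ≠ q2 := by simp [hPdef, Finset.mem_offDiag] at hq; exact hq
    have : ((Finset.univ.filter fun p : E × E × E =>
        p.1 ≠ p.2.1 ∧ G.Adj p.1 p.2.2 ∧ G.Adj p.2.1 p.2.2).filter
          fun p => (p.1, p.2.1) = (q1, q2))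
        = (Finset.univ.filter fun w => G.Adj q1 w ∧ G.Adj q2 w).map
            ⟨fun z => (q1, q2, z), fun a b h => by simpa using h⟩ := by
      ext ⟨x, y, z⟩
      simp only [Finset.mem_filter, Finset.mem_map, Finset.mem_univ, true_and,
        Function.Embedding.coeFn_mk, Prod.mk.injEq]
      constructor
      · rintro ⟨⟨-, h1, h2⟩, rfl, rfl⟩
        exact ⟨z, ⟨h1, h2⟩, rfl⟩
      · rintro ⟨w, ⟨h1, h2⟩, rfl, rfl, rfl⟩
        exact ⟨⟨hne, h1, h2⟩, rfl, rfl⟩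
    rw [this, Finset.card_map]
  -- count of ordered d-prisms
  have hPr : (Set.ncard {p : E × E × (Fin d → E) |
      p.1 ≠ p.2.1 ∧ Function.Injective p.2.2 ∧
      ∀ i, G.Adj (p.2.2 i) p.1 ∧ G.Adj (p.2.2 i) p.2.1})
      = ∑ q ∈ P, (ks q).descFactorial d := by
    have hset : {p : E × E × (Fin d → E) |
        p.1 ≠ p.2.1 ∧ Function.Injective p.2.2 ∧
        ∀ i, G.Adj (p.2.2 i) p.1 ∧ G.Adj (p.2.2 i) p.2.1}
        = ↑(Finset.univ.filter fun p : E × E × (Fin d → E) =>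
            p.1 ≠ p.2.1 ∧ Function.Injective p.2.2 ∧
            ∀ i, G.Adj (p.2.2 i) p.1 ∧ G.Adj (p.2.2 i) p.2.1) := by
      ext p; simp
    rw [hset, Set.ncard_coe_finset,
      Finset.card_eq_sum_card_fiberwise
        (f := fun p : E × E × (Fin d → E) => (p.1, p.2.1)) (t := P)
        (by intro p hp; simp only [Finset.mem_coe, Finset.mem_filter] at hp
            simp [hPdef, Finset.mem_offDiag, hp.2.1])]
    refine Finset.sum_congr rfl fun q hq => ?_
    obtain ⟨q1, q2⟩ := q
    have hne : q1 ≠ q2 := by simp [hPdef, Finset.mem_offDiag] at hq; exact hq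
    have : ((Finset.univ.filter fun p : E × E × (Fin d → E) =>
        p.1 ≠ p.2.1 ∧ Function.Injective p.2.2 ∧
        ∀ i, G.Adj (p.2.2 i) p.1 ∧ G.Adj (p.2.2 i) p.2.1).filter
          fun p => (p.1, p.2.1) = (q1, q2))
        = (Finset.univ.filter fun f : Fin d → E => Function.Injective f ∧
            ∀ i, f i ∈ Finset.univ.filter fun w => G.Adj q1 w ∧ G.Adj q2 w).map
            ⟨fun f => (q1, q2, f), fun a b h => by simpa using h⟩ := by
      ext ⟨x, y, f⟩
      simp only [Finset.mem_filter, Finset.mem_map, Finset.mem_univ, true_and,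
        Function.Embedding.coeFn_mk, Prod.mk.injEq]
      constructor
      · rintro ⟨⟨-, hinj, hadj⟩, rfl, rfl⟩
        exact ⟨f, ⟨hinj, fun i => ⟨(hadj i).1.symm, (hadj i).2.symm⟩⟩, rfl⟩
      · rintro ⟨g, ⟨hinj, hadj⟩, rfl, rfl, rfl⟩
        exact ⟨⟨hne, hinj, fun i => ⟨(hadj i).1.symm, (hadj i).2.symm⟩⟩, rfl, rfl⟩
    rw [this, Finset.card_map, card_inj_into]
  -- auxiliary numeric facts
  have hd1R : (1 : ℝ) ≤ (d : ℝ) := by exact_mod_cast hd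
  have hT0 : 0 ≤ T := by nlinarith [sq_nonneg (N : ℝ)]
  have hPcard : (P.card : ℝ) ≤ (N : ℝ) ^ 2 := by
    have h1 : P.card = N * N - N := by
      rw [hPdef, Finset.offDiag_card, Finset.card_univ, hN]
    have h2'' : P.card ≤ N * N := h1 ▸ Nat.sub_le _ _
    calc (P.card : ℝ) ≤ ((N * N : ℕ) : ℝ) := by exact_mod_cast h2''
      _ = (N : ℝ) ^ 2 := by push_cast; ring
  set k' : E × E → ℕ := fun q => ks q + 1 - d with hk'def
  have hSum : T / 2 ≤ ∑ q ∈ P, (k' q : ℝ) := by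
    have h1 : ∀ q ∈ P, (ks q : ℝ) - ((d : ℝ) - 1) ≤ (k' q : ℝ) := by
      intro q _
      rcases le_or_gt d (ks q + 1) with h | h
      · rw [hk'def]
        dsimp only
        rw [Nat.cast_sub h]
        push_cast
        linarith
      · have hz : ks q + 1 - d = 0 := Nat.sub_eq_zero_of_le h.le
        rw [hk'def]
        dsimp only
        rw [hz]
        have : ((ks q : ℕ) : ℝ) + 1 < (d : ℝ) := by exact_mod_cast h
        simp only [Nat.cast_zero]
        linarith
    have h2' : (∑ q ∈ P, (ks q : ℝ)) - ((d : ℝ) - 1) * P.card ≤ ∑ q ∈ P, (k' q : ℝ) := by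
      calc (∑ q ∈ P, (ks q : ℝ)) - ((d : ℝ) - 1) * P.card
          = ∑ q ∈ P, ((ks q : ℝ) - ((d : ℝ) - 1)) := by
            rw [Finset.sum_sub_distrib, Finset.sum_const, nsmul_eq_mul, mul_comm]
        _ ≤ _ := Finset.sum_le_sum h1
    have hks : T ≤ ∑ q ∈ P, (ks q : ℝ) := by
      rw [h2] at hT; exact_mod_cast hT
    have hd1 : (0 : ℝ) ≤ (d : ℝ) - 1 := by
      have : (1 : ℝ) ≤ (d : ℝ) := by exact_mod_cast hd
      linarith
    nlinarith [mul_le_mul_of_nonneg_left hPcard hd1]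
  have hSum0 : (0 : ℝ) ≤ ∑ q ∈ P, (k' q : ℝ) := le_trans (by linarith) hSum
  -- lower bound on prisms via descFactorial and Hölder
  have hDesc : ∑ q ∈ P, ((k' q : ℝ)) ^ d ≤ ∑ q ∈ P, ((ks q).descFactorial d : ℝ) := by
    refine Finset.sum_le_sum fun q _ => ?_
    exact_mod_cast Nat.pow_sub_le_descFactorial (ks q) d
  have hHolder : (∑ q ∈ P, (k' q : ℝ)) ^ d / (P.card : ℝ) ^ (d - 1)
      ≤ ∑ q ∈ P, ((k' q : ℝ)) ^ d := by
    have := pow_sum_div_card_le_sum_pow (s := P) (f := fun q => (k' q : ℝ))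
      (fun i _ => by positivity) (d - 1)
    rwa [Nat.sub_add_cancel hd] at this
  rw [hPr]
  push_cast
  rcases eq_or_lt_of_le hT0 with hTeq | hTpos
  · rw [← hTeq]
    have : ((0 : ℝ) / 2) ^ d = 0 := by
      rw [zero_div]; exact zero_pow (by omega)
    rw [this, zero_div]
    positivity
  · have hPne : 0 < P.card := by
      by_contra h
      push_neg at h
      interval_cases hc : P.card
      · have : P = ∅ := Finset.card_eq_zero.mp hc
        rw [h2, this] at hT
        simp at hT
        linarith
    have hfinal : (T / 2) ^ d / (N : ℝ) ^ (2 * (d - 1))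
        ≤ (∑ q ∈ P, (k' q : ℝ)) ^ d / (P.card : ℝ) ^ (d - 1) := by
      have hnum : (T / 2) ^ d ≤ (∑ q ∈ P, (k' q : ℝ)) ^ d :=
        pow_le_pow_left₀ (by linarith) hSum _
      have hden : (P.card : ℝ) ^ (d - 1) ≤ (N : ℝ) ^ (2 * (d - 1)) := by
        rw [pow_mul]
        exact pow_le_pow_left₀ (by positivity) hPcard _
      exact div_le_div₀ (by positivity) hnum (by positivity) hden
    calc (T / 2) ^ d / (N : ℝ) ^ (2 * (d - 1))
        ≤ (∑ q ∈ P, (k' q : ℝ)) ^ d / (P.card : ℝ) ^ (d - 1) := hfinal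
      _ ≤ ∑ q ∈ P, ((k' q : ℝ)) ^ d := hHolder
      _ ≤ ∑ q ∈ P, ((ks q).descFactorial d : ℝ) := hDesc
end

section
/- Let q be an odd prime power, d ≥ 2, t ∈ F_q nonzero, and B ⊆ F_q^d a finite set. Suppose Pole(B) = ∩_{b ∈ B} (S_t + b) satisfies |Pole(B)| > 2q^{a−1} for some integer a ≥ 1. Then for every y, z ∈ Pole(B), there exists J ⊆ Pole(B) with |J| = a such that J ∪ {y, z} is affinely independent. -/
section Aux

variable {F : Type*} [Field F]

/-- Inserting a point outside the affine span preserves affine independence (set version). -/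
lemma aux_affineIndependent_insert {V : Type*} [AddCommGroup V] [Module F V]
    {s : Set V} (hs : AffineIndependent F ((↑) : s → V)) {x : V}
    (hx : x ∉ affineSpan F s) :
    AffineIndependent F ((↑) : ↥(insert x s) → V) := by
  have hxs : x ∉ s := fun h => hx (subset_affineSpan F s h)
  set i : ↥(insert x s) := ⟨x, Set.mem_insert x s⟩ with hi
  have hmem : ∀ y : {y : ↥(insert x s) // y ≠ i}, (y : ↥(insert x s)).1 ∈ s := by
    rintro ⟨⟨v, hv⟩, hne⟩
    rcases hv with h | h
    · exact absurd (Subtype.ext h) hne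
    · exact h
  apply AffineIndependent.affineIndependent_of_notMem_span (i := i)
  · let f : {y : ↥(insert x s) // y ≠ i} ↪ ↥s :=
      ⟨fun y => ⟨(y : ↥(insert x s)).1, hmem y⟩, by
        intro a b h
        apply Subtype.ext
        apply Subtype.ext
        simpa using congrArg Subtype.val h⟩
    exact hs.comp_embedding f
  · intro hcon
    apply hx
    have hsub : ((fun y : ↥(insert x s) => (y : V)) '' {y | y ≠ i} : Set V) ⊆ s := by
      rintro _ ⟨y, hy, rfl⟩
      exact hmem ⟨y, hy⟩
    exact affineSpan_mono F hsub hcon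

/-- A singleton set is affinely independent. -/
lemma aux_affineIndependent_singleton {V : Type*} [AddCommGroup V] [Module F V] (y : V) :
    AffineIndependent F ((↑) : ({y} : Set V) → V) := by
  haveI : Subsingleton (↥({y} : Set V)) :=
    (Set.subsingleton_coe _).mpr Set.subsingleton_singleton
  exact affineIndependent_of_subsingleton F _

/-- A pair of points is affinely independent. -/
lemma aux_affineIndependent_pair {V : Type*} [AddCommGroup V] [Module F V] (y z : V) :
    AffineIndependent F ((↑) : ({y, z} : Set V) → V) := by
  by_cases h : y = z
  · subst h
    rw [Set.pair_eq_singleton]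
    exact aux_affineIndependent_singleton y
  · exact aux_affineIndependent_insert (aux_affineIndependent_singleton z)
      (fun hc => h ((AffineSubspace.mem_affineSpan_singleton _ _).mp hc))

variable [Fintype F] [DecidableEq F]

/-- The affine span of a nonempty finite set of points has at most
`q ^ (card - 1)` points. -/
lemma aux_span_ncard {n : ℕ} (s : Finset (Fin n → F)) (hne : s.Nonempty) :
    Set.ncard ((affineSpan F (↑s : Set (Fin n → F)) : Set (Fin n → F)))
      ≤ Fintype.card F ^ (s.card - 1) := by
  classical
  obtain ⟨p, hp⟩ := hne
  set W : Submodule F (Fin n → F) := vectorSpan F (↑s : Set (Fin n → F)) with hW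
  have hpspan : p ∈ affineSpan F (↑s : Set (Fin n → F)) :=
    mem_affineSpan F (Finset.mem_coe.mpr hp)
  have hmaps : ∀ x ∈ (affineSpan F (↑s : Set (Fin n → F)) : Set (Fin n → F)),
      x - p ∈ (W : Set (Fin n → F)) := by
    intro x hx
    have := AffineSubspace.vsub_mem_direction hx hpspan
    rwa [direction_affineSpan] at this
  haveI : Fintype W := Fintype.ofFinite W
  have hcardW : Set.ncard (W : Set (Fin n → F)) = Fintype.card F ^ Module.finrank F W := by
    rw [← Nat.card_coe_set_eq, Nat.card_eq_fintype_card]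
    exact Module.card_eq_pow_finrank (K := F) (V := W)
  have hfr : Module.finrank F W ≤ s.card - 1 := by
    have hcards : s.card = (s.card - 1) + 1 :=
      (Nat.succ_pred_eq_of_pos (Finset.card_pos.mpr ⟨p, hp⟩)).symm
    have h2 := finrank_vectorSpan_image_finset_le F (id : (Fin n → F) → (Fin n → F)) s hcards
    rw [Finset.image_id] at h2
    rwa [hW]
  have hinj : Set.InjOn (fun x => x - p)
      ((affineSpan F (↑s : Set (Fin n → F)) : Set (Fin n → F))) := by
    intro a _ b _ h
    simpa using sub_left_injective h
  calc Set.ncard ((affineSpan F (↑s : Set (Fin n → F)) : Set (Fin n → F)))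
      ≤ Set.ncard (W : Set (Fin n → F)) :=
        Set.ncard_le_ncard_of_injOn (fun x => x - p) hmaps hinj (Set.toFinite _)
    _ = Fintype.card F ^ Module.finrank F W := hcardW
    _ ≤ Fintype.card F ^ (s.card - 1) :=
        Nat.pow_le_pow_right Fintype.card_pos hfr

/-- Greedy extension of an affinely independent subset of a large set `P`. -/
lemma aux_grow {n a : ℕ} (P : Set (Fin n → F))
    (hP : Fintype.card F ^ (a - 1) < P.ncard) :
    ∀ k (s : Finset (Fin n → F)), ↑s ⊆ P → s.Nonempty → s.card + k = a →
      AffineIndependent F ((↑) : (↑s : Set (Fin n → F)) → (Fin n → F)) →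
      ∃ J : Finset (Fin n → F), s ⊆ J ∧ ↑J ⊆ P ∧ J.card = a ∧
        AffineIndependent F ((↑) : (↑J : Set (Fin n → F)) → (Fin n → F)) := by
  classical
  intro k
  induction k with
  | zero =>
      intro s hsP _ hcard hind
      exact ⟨s, le_refl s, hsP, by simpa using hcard, hind⟩
  | succ k ih =>
      intro s hsP hne hcard hind
      have hsle : s.card ≤ a := by omega
      have hspan_small :
          Set.ncard ((affineSpan F (↑s : Set (Fin n → F)) : Set (Fin n → F))) < P.ncard := by
        calc Set.ncard ((affineSpan F (↑s : Set (Fin n → F)) : Set (Fin n → F)))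
            ≤ Fintype.card F ^ (s.card - 1) := aux_span_ncard s hne
          _ ≤ Fintype.card F ^ (a - 1) :=
              Nat.pow_le_pow_right Fintype.card_pos (by omega)
          _ < P.ncard := hP
      have hex : ∃ x ∈ P, x ∉ affineSpan F (↑s : Set (Fin n → F)) := by
        by_contra hcon
        push_neg at hcon
        have hsub : P ⊆ (affineSpan F (↑s : Set (Fin n → F)) : Set (Fin n → F)) := hcon
        exact absurd (Set.ncard_le_ncard hsub (Set.toFinite _)) (by omega)
      obtain ⟨x, hxP, hxspan⟩ := hex
      have hxs : x ∉ s := fun h => hxspan (subset_affineSpan F _ (by exact_mod_cast h))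
      have hind' : AffineIndependent F
          ((↑) : (↑(insert x s) : Set (Fin n → F)) → (Fin n → F)) := by
        rw [Finset.coe_insert]
        exact aux_affineIndependent_insert hind hxspan
      obtain ⟨J, hsJ, hJP, hJcard, hJind⟩ := ih (insert x s)
        (by rw [Finset.coe_insert]; exact Set.insert_subset hxP hsP)
        ⟨x, Finset.mem_insert_self x s⟩
        (by rw [Finset.card_insert_of_notMem hxs]; omega) hind'
      exact ⟨J, (Finset.subset_insert x s).trans hsJ, hJP, hJcard, hJind⟩

end Aux

/-- If `|Pole(B)| > 2 q^(a-1)`, then for every `y, z ∈ Pole(B)` there is a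
subset `J ⊆ Pole(B)` of size `a` with `J ∪ {y, z}` affinely independent. -/
theorem poles_contain_affinely_independent_subset
    {q d a : ℕ} (F : Type*) [Field F] [Fintype F] [DecidableEq F]
    (hcard : Fintype.card F = q) (hq : Odd q)
    (hd : 2 ≤ d) (t : F) (ht : t ≠ 0) (ha : 1 ≤ a)
    (B : Set (Fin d → F)) (hBfin : B.Finite) (hBne : B.Nonempty)
    (hpoles : 2 * q ^ (a - 1)
      < Set.ncard {x : Fin d → F | ∀ b ∈ B, ∑ i, (x i - b i) ^ 2 = t}) :
    ∀ y ∈ {x : Fin d → F | ∀ b ∈ B, ∑ i, (x i - b i) ^ 2 = t},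
    ∀ z ∈ {x : Fin d → F | ∀ b ∈ B, ∑ i, (x i - b i) ^ 2 = t},
    ∃ J : Finset (Fin d → F),
      ↑J ⊆ {x : Fin d → F | ∀ b ∈ B, ∑ i, (x i - b i) ^ 2 = t} ∧
      J.card = a ∧
      AffineIndependent F ((↑) : ((J ∪ {y, z} : Finset (Fin d → F)) : Set (Fin d → F)) → (Fin d → F)) := by
  classical
  intro y hy z hz
  set P : Set (Fin d → F) := {x : Fin d → F | ∀ b ∈ B, ∑ i, (x i - b i) ^ 2 = t} with hPdef
  have hP : Fintype.card F ^ (a - 1) < P.ncard := by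
    have h1 : Fintype.card F ^ (a - 1) ≤ 2 * Fintype.card F ^ (a - 1) := by omega
    have h2 : 2 * Fintype.card F ^ (a - 1) < P.ncard := by rw [hcard]; exact hpoles
    omega
  obtain rfl | ha2 : a = 1 ∨ 2 ≤ a := by omega
  · -- a = 1 : take J = {y}; then J ∪ {y,z} = {y,z}, a pair, always independent
    refine ⟨{y}, by simpa using hy, Finset.card_singleton y, ?_⟩
    have hu : (({y} ∪ {y, z} : Finset (Fin d → F)) : Set (Fin d → F))
        = ({y, z} : Set (Fin d → F)) := by
      ext w; simp [or_assoc]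
    rw [hu]
    exact aux_affineIndependent_pair y z
  · -- a ≥ 2 : build J containing both y and z
    by_cases hyz : y = z
    · subst hyz
      obtain ⟨J, hsJ, hJP, hJcard, hJind⟩ := aux_grow P hP (a - 1) {y}
        (by simpa using hy) ⟨y, Finset.mem_singleton_self y⟩
        (by simp; omega)
        (by rw [Finset.coe_singleton]; exact aux_affineIndependent_singleton y)
      have hyJ : y ∈ J := hsJ (Finset.mem_singleton_self y)
      have hu : (J ∪ {y, y} : Finset (Fin d → F)) = J := by
        apply Finset.union_eq_left.mpr
        intro w hw
        simp only [Finset.mem_insert, Finset.mem_singleton, or_self] at hw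
        exact hw ▸ hyJ
      exact ⟨J, hJP, hJcard, by rw [hu]; exact hJind⟩
    · have hyzs : y ∉ ({z} : Finset (Fin d → F)) := by simpa using hyz
      obtain ⟨J, hsJ, hJP, hJcard, hJind⟩ := aux_grow P hP (a - 2) ({y, z} : Finset (Fin d → F))
        (by
          intro w hw
          simp only [Finset.coe_insert, Finset.coe_singleton, Set.mem_insert_iff,
            Set.mem_singleton_iff] at hw
          rcases hw with rfl | rfl
          exacts [hy, hz])
        ⟨y, Finset.mem_insert_self y _⟩
        (by rw [Finset.card_insert_of_notMem hyzs, Finset.card_singleton]; omega)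
        (by
          rw [Finset.coe_insert, Finset.coe_singleton]
          exact aux_affineIndependent_pair y z)
      have hu : (J ∪ {y, z} : Finset (Fin d → F)) = J := Finset.union_eq_left.mpr hsJ
      exact ⟨J, hJP, hJcard, by rw [hu]; exact hJind⟩
end
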